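/- For the Jordan chain equation (S^{t+1} + b S^{t+2}) w = v with v = e_1 − e_{ℓ+1} and 1 ≤ ℓ, t+2+ℓ ≤ n: the vector w = (b(−1+(−b)^ℓ)/(1+b)) e_1 + (1 − (−b)^ℓ) e_{t+2} − Σ_{p=1}^{ℓ} (−b)^{ℓ−p} e_{t+2+p} satisfies (S^{t+1} + b S^{t+2}) w = v and Σ_{j=1}^n w_j = 0, provided b ≠ −1. -/

import Mathlib

open Matrix Finset

/-- The n×n shift matrix with ones on the superdiagonal. -/
def shiftMat (n : ℕ) : Matrix (Fin n) (Fin n) ℂ :=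
  Matrix.of fun j k => if (k : ℕ) = (j : ℕ) + 1 then 1 else 0

/-- The standard basis vector `e_{i+1}` of `ℂ^n`, indexed by `i : ℕ` (zero-based). -/
def stdVec (n : ℕ) (i : ℕ) : Fin n → ℂ := fun j => if (j : ℕ) = i then 1 else 0

/-!
`S ^ (t + 1)` kills `e₁` and maps `e_{t+1+k}` to `e_k` for `k ≥ 1`, so
`(S^{t+1} + b S^{t+2}) w = (1 + b S) ((1 - (-b)^ℓ) e₁ - ∑_{p=1}^{ℓ} (-b)^{ℓ-p} e_{p+1})`,
and the sum telescopes to `e_{ℓ+1} - (-b)^ℓ e₁`. The same telescoping identity for constant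
vectors is the geometric sum `(1 + b) ∑_{p=1}^{ℓ} (-b)^{ℓ-p} = 1 - (-b)^ℓ`, which makes the
coordinate sum of `w` vanish.
-/

lemma sum_Icc_pow_smul_sub_smul_sum_pred {R V : Type*} [CommRing R] [AddCommGroup V]
    [Module R V] (x : R) (f : ℕ → V) (ℓ : ℕ) :
    ∑ p ∈ Icc 1 ℓ, x ^ (ℓ - p) • f p - x • ∑ p ∈ Icc 1 ℓ, x ^ (ℓ - p) • f (p - 1)
      = f ℓ - x ^ ℓ • f 0 := by
  rw [smul_sum, ← sum_sub_distrib]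
  induction ℓ with
  | zero => simp
  | succ ℓ ih =>
    have hshift : ∑ p ∈ Icc 1 ℓ, (x ^ (ℓ + 1 - p) • f p - x • x ^ (ℓ + 1 - p) • f (p - 1))
        = x • ∑ p ∈ Icc 1 ℓ, (x ^ (ℓ - p) • f p - x • x ^ (ℓ - p) • f (p - 1)) := by
      rw [smul_sum]
      refine sum_congr rfl fun p hp => ?_
      rw [Nat.sub_add_comm (mem_Icc.mp hp).2, pow_succ']
      module
    rw [sum_Icc_succ_top (by omega), hshift, ih, Nat.sub_self, Nat.add_sub_cancel, pow_succ']
    module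

lemma shiftMat_mulVec_apply (n : ℕ) (v : Fin n → ℂ) (j : Fin n) :
    (shiftMat n *ᵥ v) j = if h : (j : ℕ) + 1 < n then v ⟨(j : ℕ) + 1, h⟩ else 0 := by
  simp only [shiftMat, mulVec, dotProduct, of_apply, ite_mul, one_mul, zero_mul]
  split_ifs with hj
  · rw [Fintype.sum_eq_single ⟨(j : ℕ) + 1, hj⟩]
    · simp
    · intro k hk
      simp [Fin.ext_iff.not.mp hk]
  · exact Fintype.sum_eq_zero _ fun k => if_neg (by omega)

lemma shiftMat_mulVec_stdVec_zero (n : ℕ) : shiftMat n *ᵥ stdVec n 0 = 0 := by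
  ext j
  simp [shiftMat_mulVec_apply, stdVec]

lemma shiftMat_mulVec_stdVec_succ {n i : ℕ} (hi : i + 1 < n) :
    shiftMat n *ᵥ stdVec n (i + 1) = stdVec n i := by
  ext j
  simp only [shiftMat_mulVec_apply, stdVec]
  split_ifs <;> simp_all

lemma shiftMat_pow_succ_mulVec_stdVec_zero (n m : ℕ) :
    shiftMat n ^ (m + 1) *ᵥ stdVec n 0 = 0 := by
  rw [pow_succ, ← mulVec_mulVec, shiftMat_mulVec_stdVec_zero, mulVec_zero]

lemma shiftMat_pow_mulVec_stdVec_add {n m i : ℕ} (hi : i + m < n) :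
    shiftMat n ^ m *ᵥ stdVec n (i + m) = stdVec n i := by
  induction m generalizing i with
  | zero => simp
  | succ m ih =>
    rw [pow_succ, ← mulVec_mulVec, ← add_assoc, shiftMat_mulVec_stdVec_succ (by omega),
      ih (by omega)]

lemma shiftMat_pow_mulVec_stdVec_self {n m : ℕ} (hm : m < n) :
    shiftMat n ^ m *ᵥ stdVec n m = stdVec n 0 := by
  simpa using shiftMat_pow_mulVec_stdVec_add (i := 0) (by omega : 0 + m < n)

lemma shiftMat_pow_mulVec_sum_smul_stdVec_add {n m ℓ : ℕ} (h : m + ℓ < n) (d : ℕ → ℂ) :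
    shiftMat n ^ m *ᵥ ∑ p ∈ Icc 1 ℓ, d p • stdVec n (m + p)
      = ∑ p ∈ Icc 1 ℓ, d p • stdVec n p := by
  rw [mulVec_sum]
  refine sum_congr rfl fun p hp => ?_
  rw [mulVec_smul, add_comm, shiftMat_pow_mulVec_stdVec_add (by grind)]

lemma shiftMat_mulVec_sum_smul_stdVec {n ℓ : ℕ} (h : ℓ < n) (d : ℕ → ℂ) :
    shiftMat n *ᵥ ∑ p ∈ Icc 1 ℓ, d p • stdVec n p = ∑ p ∈ Icc 1 ℓ, d p • stdVec n (p - 1) := by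
  rw [mulVec_sum]
  refine sum_congr rfl fun p hp => ?_
  obtain ⟨q, rfl⟩ := Nat.exists_eq_add_of_le' (mem_Icc.mp hp).1
  rw [mulVec_smul, shiftMat_mulVec_stdVec_succ (by grind), Nat.add_sub_cancel]

lemma sum_smul_stdVec {n i : ℕ} (hi : i < n) (a : ℂ) : ∑ j : Fin n, (a • stdVec n i) j = a := by
  rw [Fintype.sum_eq_single ⟨i, hi⟩]
  · simp [stdVec]
  · intro k hk
    simp [stdVec, Fin.ext_iff.not.mp hk]

lemma sum_sum_smul_stdVec {ι : Type*} {n : ℕ} {s : Finset ι} {i : ι → ℕ} (hi : ∀ p ∈ s, i p < n)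
    (d : ι → ℂ) : ∑ j : Fin n, (∑ p ∈ s, d p • stdVec n (i p)) j = ∑ p ∈ s, d p := by
  simp only [Finset.sum_apply]
  rw [sum_comm]
  exact sum_congr rfl fun p hp => sum_smul_stdVec (hi p hp) (d p)

theorem jordan_chain_solution_general (n t ℓ : ℕ)
    (hle : t + 2 + ℓ ≤ n) (b : ℂ) (hb : b ≠ -1)
    (w : Fin n → ℂ)
    (hw : w = (b * (-1 + (-b) ^ ℓ) / (1 + b)) • stdVec n 0
            + (1 - (-b) ^ ℓ) • stdVec n (t + 1)
            - ∑ p ∈ Finset.Icc 1 ℓ, (-b) ^ (ℓ - p) • stdVec n (t + 1 + p)) :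
    ((shiftMat n) ^ (t + 1) + b • (shiftMat n) ^ (t + 2)).mulVec w
      = stdVec n 0 - stdVec n ℓ ∧
    ∑ j : Fin n, w j = 0 := by
  have hSw : shiftMat n ^ (t + 1) *ᵥ w
      = (1 - (-b) ^ ℓ) • stdVec n 0 - ∑ p ∈ Icc 1 ℓ, (-b) ^ (ℓ - p) • stdVec n p := by
    rw [hw, mulVec_sub, mulVec_add, mulVec_smul, mulVec_smul,
      shiftMat_pow_mulVec_sum_smul_stdVec_add (by omega), shiftMat_pow_succ_mulVec_stdVec_zero,
      shiftMat_pow_mulVec_stdVec_self (by omega), smul_zero, zero_add]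
  constructor
  · have htel := sum_Icc_pow_smul_sub_smul_sum_pred (-b) (stdVec n) ℓ
    rw [add_mulVec, smul_mulVec, pow_succ' _ (t + 1), ← mulVec_mulVec, hSw, mulVec_sub,
      mulVec_smul, shiftMat_mulVec_sum_smul_stdVec (by omega), shiftMat_mulVec_stdVec_zero]
    linear_combination (norm := module) -htel
  · have h1b : 1 + b ≠ 0 := fun h => hb (by linear_combination h)
    have hgeom : ∑ p ∈ Icc 1 ℓ, (-b) ^ (ℓ - p) = (1 - (-b) ^ ℓ) / (1 + b) := by
      have := sum_Icc_pow_smul_sub_smul_sum_pred (-b) (fun _ => (1 : ℂ)) ℓ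
      simp only [smul_eq_mul, mul_one] at this
      rw [eq_div_iff h1b]
      linear_combination this
    simp only [hw, Pi.sub_apply, Pi.add_apply, sum_sub_distrib, sum_add_distrib,
      sum_smul_stdVec (by omega : 0 < n), sum_smul_stdVec (by omega : t + 1 < n),
      sum_sum_smul_stdVec (fun p hp => by grind : ∀ p ∈ Icc 1 ℓ, t + 1 + p < n), hgeom]
    field_simp
    ring

/-- For the Jordan chain equation `(S^{t+1} + b S^{t+2}) w = e₁ − e_{ℓ+1}` with
`t+2+ℓ ≤ n` and `b ≠ −1`, the explicit vector
`w = (b(−1+(−b)^ℓ)/(1+b)) e₁ + (1−(−b)^ℓ) e_{t+2} − Σ_{p=1}^{ℓ} (−b)^{ℓ−p} e_{t+2+p}`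
solves the equation and has zero coordinate sum. -/
theorem jordan_chain_solution (n t ℓ : ℕ) (hn : 2 ≤ n) (ht1 : 1 ≤ t) (ht2 : t ≤ n - 2)
    (hℓ : 1 ≤ ℓ) (hle : t + 2 + ℓ ≤ n) (b : ℂ) (hb : b ≠ -1)
    (w : Fin n → ℂ)
    (hw : w = (b * (-1 + (-b) ^ ℓ) / (1 + b)) • stdVec n 0
            + (1 - (-b) ^ ℓ) • stdVec n (t + 1)
            - ∑ p ∈ Finset.Icc 1 ℓ, (-b) ^ (ℓ - p) • stdVec n (t + 1 + p)) :
    ((shiftMat n) ^ (t + 1) + b • (shiftMat n) ^ (t + 2)).mulVec w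
      = stdVec n 0 - stdVec n ℓ ∧
    ∑ j : Fin n, w j = 0 :=
  jordan_chain_solution_general n t ℓ hle b hb w hw
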